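/- arXiv:1911.04419 — 3 statements merged into one kernel-verified Lean document; each statement's English description precedes it below -/
import Mathlib

section
/- If T is a bounded operator on H such that T(N(A)) is not contained in N(A) (where N(A) is the kernel of A), then the A-numerical range W_A(T) = {⟨Tx,x⟩_A : ‖x‖_A = 1} equals all of ℂ; in particular the A-numerical radius ω_A(T) is infinite. -/
/-! If `A x₀ = 0` but `A (T x₀) ≠ 0`, then `x₀` is invisible to `⟨·,·⟩_A`: adding `λ x₀` to an
`A`-unit vector `x` keeps `‖x‖_A = 1` and changes `⟨Tx, x⟩_A` by `conj λ ⟨T x₀, x⟩_A`. Taking `x`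
along `T x₀` makes this coefficient nonzero, so `⟨Tx, x⟩_A` sweeps out all of `ℂ` as `λ` varies. -/

open Filter

variable {H : Type*} [NormedAddCommGroup H] [InnerProductSpace ℂ H] [CompleteSpace H]

/-- The seminorm induced by a positive operator `A`: `‖x‖_A = ⟨Ax,x⟩^{1/2}`. -/
noncomputable def anorm (A : H →L[ℂ] H) (x : H) : ℝ :=
  Real.sqrt ((inner ℂ (A x) x : ℂ).re)

/-- `T` is `A`-bounded: there is `c > 0` with `‖Tx‖_A ≤ c‖x‖_A` for all `x`. -/
def ABounded (A T : H →L[ℂ] H) : Prop :=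
  ∃ c > 0, ∀ x : H, anorm A (T x) ≤ c * anorm A x

/-- The `A`-operator seminorm `‖T‖_A = sup{‖Tx‖_A : ‖x‖_A = 1}`. -/
noncomputable def opAnorm (A T : H →L[ℂ] H) : ℝ :=
  sSup {c : ℝ | ∃ x : H, anorm A x = 1 ∧ c = anorm A (T x)}

/-- The `A`-spectral radius `r_A(T) = inf_{n ≥ 1} ‖Tⁿ‖_A^{1/n}`. -/
noncomputable def rA (A T : H →L[ℂ] H) : ℝ :=
  ⨅ n : ℕ+, opAnorm A (T ^ (n : ℕ)) ^ (((n : ℕ) : ℝ)⁻¹)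

/-- The `A`-numerical radius `ω_A(T) = sup{|⟨Tx,x⟩_A| : ‖x‖_A = 1}`. -/
noncomputable def wA (A T : H →L[ℂ] H) : ℝ :=
  sSup {c : ℝ | ∃ x : H, anorm A x = 1 ∧ c = ‖(inner ℂ (A (T x)) x : ℂ)‖}

open scoped InnerProductSpace ComplexConjugate

section

variable {E : Type*} [NormedAddCommGroup E] [InnerProductSpace ℂ E]

theorem ContinuousLinearMap.IsPositive.apply_eq_zero_of_re_inner_self_eq_zero [CompleteSpace E]
    {A : E →L[ℂ] E} (hA : A.IsPositive) {x : E} (hx : (⟪A x, x⟫_ℂ).re = 0) : A x = 0 := by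
  obtain ⟨B, rfl⟩ := CStarAlgebra.nonneg_iff_eq_star_mul_self.mp
    ((ContinuousLinearMap.nonneg_iff_isPositive A).mpr hA)
  have hB : B x = 0 := by
    rw [mul_apply_eq_comp, ContinuousLinearMap.star_eq_adjoint,
      ContinuousLinearMap.adjoint_inner_left] at hx
    exact (re_inner_self_nonpos (𝕜 := ℂ)).mp hx.le
  simp [hB]

theorem anorm_smul (A : E →L[ℂ] E) (c : ℂ) (x : E) : anorm A (c • x) = ‖c‖ * anorm A x := by
  have : ⟪A (c • x), c • x⟫_ℂ = ((‖c‖ ^ 2 : ℝ) : ℂ) * ⟪A x, x⟫_ℂ := by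
    rw [map_smul, inner_smul_left, inner_smul_right, ← mul_assoc, RCLike.conj_mul]
    norm_cast
  rw [anorm, anorm, this, Complex.re_ofReal_mul, Real.sqrt_mul (by positivity),
    Real.sqrt_sq (norm_nonneg c)]

theorem inner_apply_eq_zero_of_apply_eq_zero {A : E →L[ℂ] E} (hA : (A : E →ₗ[ℂ] E).IsSymmetric)
    (y : E) {x₀ : E} (hx₀ : A x₀ = 0) : ⟪A y, x₀⟫_ℂ = 0 := by
  simpa [hx₀] using hA y x₀

theorem anorm_add_smul_of_apply_eq_zero {A : E →L[ℂ] E} (hA : (A : E →ₗ[ℂ] E).IsSymmetric)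
    (x : E) (c : ℂ) {x₀ : E} (hx₀ : A x₀ = 0) : anorm A (x + c • x₀) = anorm A x := by
  rw [anorm, anorm, map_add, map_smul, hx₀, smul_zero, add_zero, inner_add_right,
    inner_smul_right, inner_apply_eq_zero_of_apply_eq_zero hA x hx₀, mul_zero, add_zero]

theorem inner_comp_apply_add_smul_of_apply_eq_zero {A : E →L[ℂ] E}
    (hA : (A : E →ₗ[ℂ] E).IsSymmetric) (T : E →L[ℂ] E) (x : E) (c : ℂ) {x₀ : E} (hx₀ : A x₀ = 0) :
    ⟪A (T (x + c • x₀)), x + c • x₀⟫_ℂ = ⟪A (T x), x⟫_ℂ + conj c * ⟪A (T x₀), x⟫_ℂ := by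
  simp only [map_add, map_smul, inner_add_left, inner_add_right, inner_smul_left,
    inner_smul_right, inner_apply_eq_zero_of_apply_eq_zero hA _ hx₀]
  ring

theorem exists_anorm_eq_one_inner_ne_zero [CompleteSpace E] {A : E →L[ℂ] E} (hA : A.IsPositive)
    {v : E} (hv : A v ≠ 0) : ∃ x, anorm A x = 1 ∧ ⟪A v, x⟫_ℂ ≠ 0 := by
  have hre : 0 < (⟪A v, v⟫_ℂ).re := (hA.re_inner_nonneg_left v).lt_of_ne
    fun h ↦ hv (hA.apply_eq_zero_of_re_inner_self_eq_zero h.symm)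
  have hr : 0 < anorm A v := Real.sqrt_pos.mpr hre
  refine ⟨((anorm A v)⁻¹ : ℂ) • v, ?_, ?_⟩
  · rw [anorm_smul, ← Complex.ofReal_inv, Complex.norm_real, Real.norm_of_nonneg (by positivity),
      inv_mul_cancel₀ hr.ne']
  · rw [inner_smul_right]
    exact mul_ne_zero (by simpa using hr.ne') fun h ↦ hre.ne' (by rw [h, Complex.zero_re])

theorem exists_anorm_eq_one_inner_comp_eq [CompleteSpace E] {A : E →L[ℂ] E} (hA : A.IsPositive)
    (T : E →L[ℂ] E) (hker : ∃ x₀, A x₀ = 0 ∧ A (T x₀) ≠ 0) (z : ℂ) :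
    ∃ x, anorm A x = 1 ∧ ⟪A (T x), x⟫_ℂ = z := by
  obtain ⟨x₀, hx₀, hTx₀⟩ := hker
  obtain ⟨x, hx, hd⟩ := exists_anorm_eq_one_inner_ne_zero hA hTx₀
  refine ⟨x + conj ((z - ⟪A (T x), x⟫_ℂ) / ⟪A (T x₀), x⟫_ℂ) • x₀, ?_, ?_⟩
  · rw [anorm_add_smul_of_apply_eq_zero hA.isSymmetric _ _ hx₀, hx]
  · rw [inner_comp_apply_add_smul_of_apply_eq_zero hA.isSymmetric _ _ _ hx₀, Complex.conj_conj]
    field_simp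
    ring

end

theorem stmt_4_general (A T : H →L[ℂ] H) (hA : A.IsPositive)
    (hker : ∃ x : H, A x = 0 ∧ A (T x) ≠ 0) :
    {z : ℂ | ∃ x : H, anorm A x = 1 ∧ z = (inner ℂ (A (T x)) x : ℂ)} = Set.univ ∧
      ¬ BddAbove {c : ℝ | ∃ x : H, anorm A x = 1 ∧ c = ‖(inner ℂ (A (T x)) x : ℂ)‖} := by
  have hsurj := exists_anorm_eq_one_inner_comp_eq hA T hker
  refine ⟨Set.eq_univ_of_forall fun z ↦ ?_, ?_⟩
  · obtain ⟨x, hx, hz⟩ := hsurj z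
    exact ⟨x, hx, hz.symm⟩
  · rintro ⟨c, hc⟩
    obtain ⟨x, hx, hz⟩ := hsurj (|c| + 1 : ℝ)
    have : |c| + 1 ≤ c :=
      hc ⟨x, hx, by rw [hz, Complex.norm_real, Real.norm_of_nonneg (by positivity)]⟩
    linarith [le_abs_self c]

theorem stmt_4 (A T : H →L[ℂ] H) (hA : A.IsPositive) (hA0 : A ≠ 0)
    (hker : ∃ x : H, A x = 0 ∧ A (T x) ≠ 0) :
    {z : ℂ | ∃ x : H, anorm A x = 1 ∧ z = (inner ℂ (A (T x)) x : ℂ)} = Set.univ ∧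
      ¬ BddAbove {c : ℝ | ∃ x : H, anorm A x = 1 ∧ c = ‖(inner ℂ (A (T x)) x : ℂ)‖} :=
  stmt_4_general A T hA hker
end

section
/- An A-bounded operator T is A-normaloid (i.e., r_A(T) = ‖T‖_A) if and only if ‖Tⁿ‖_A = ‖T‖_A^n for all positive integers n. -/
open Filter

variable {H : Type*} [NormedAddCommGroup H] [InnerProductSpace ℂ H] [CompleteSpace H]

/-!
Always `r_A(T) ≤ ‖Tⁿ‖_A^{1/n}`, i.e. `r_A(T)ⁿ ≤ ‖Tⁿ‖_A`, while submultiplicativity of the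
`A`-seminorm gives `‖Tⁿ‖_A ≤ ‖T‖_Aⁿ`. So `r_A(T) = ‖T‖_A` squeezes `‖Tⁿ‖_A = ‖T‖_Aⁿ`;
conversely, if `‖Tⁿ‖_A = ‖T‖_Aⁿ` for all `n ≥ 1`, every term of the infimum defining `r_A(T)`
equals `‖T‖_A`.
-/

section

variable {E : Type*} [NormedAddCommGroup E] [InnerProductSpace ℂ E]

lemma anorm_nonneg (A : E →L[ℂ] E) (x : E) : 0 ≤ anorm A x := Real.sqrt_nonneg _

lemma anorm_ofReal_smul (A : E →L[ℂ] E) {r : ℝ} (hr : 0 ≤ r) (x : E) :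
    anorm A ((r : ℂ) • x) = r * anorm A x := by
  unfold anorm
  rw [map_smul, inner_smul_left, inner_smul_right, Complex.conj_ofReal, ← mul_assoc,
    ← Complex.ofReal_mul, Complex.re_ofReal_mul, Real.sqrt_mul (mul_self_nonneg r),
    Real.sqrt_mul_self hr]

-- Also when the defining set is empty or unbounded, where `sSup` takes the junk value `0`.
lemma opAnorm_nonneg (A T : E →L[ℂ] E) : 0 ≤ opAnorm A T :=
  Real.sSup_nonneg <| by
    rintro c ⟨x, -, rfl⟩
    exact anorm_nonneg A (T x)

lemma opAnorm_le_of_forall {A T : E →L[ℂ] E} {M : ℝ} (hM : 0 ≤ M)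
    (h : ∀ x : E, anorm A x = 1 → anorm A (T x) ≤ M) : opAnorm A T ≤ M :=
  Real.sSup_le (by rintro c ⟨x, hx, rfl⟩; exact h x hx) hM

namespace ABounded

variable {A T : E →L[ℂ] E}

lemma anorm_apply_le_opAnorm (hT : ABounded A T) {x : E} (hx : anorm A x = 1) :
    anorm A (T x) ≤ opAnorm A T := by
  obtain ⟨c, -, hc⟩ := hT
  refine le_csSup ⟨c, ?_⟩ ⟨x, hx, rfl⟩
  rintro d ⟨y, hy, rfl⟩
  simpa [hy] using hc y

lemma anorm_apply_le (hT : ABounded A T) (x : E) :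
    anorm A (T x) ≤ opAnorm A T * anorm A x := by
  set a := anorm A x
  rcases (anorm_nonneg A x).eq_or_lt with ha | ha
  · obtain ⟨c, -, hc⟩ := hT
    simpa [a, ← ha] using hc x
  · have hunit : anorm A (((a⁻¹ : ℝ) : ℂ) • x) = 1 := by
      rw [anorm_ofReal_smul A (inv_nonneg.mpr ha.le), inv_mul_cancel₀ ha.ne']
    have hle := hT.anorm_apply_le_opAnorm hunit
    rw [map_smul, anorm_ofReal_smul A (inv_nonneg.mpr ha.le), inv_mul_le_iff₀ ha] at hle
    linarith

lemma anorm_pow_apply_le (hT : ABounded A T) (n : ℕ) (x : E) :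
    anorm A ((T ^ n) x) ≤ opAnorm A T ^ n * anorm A x := by
  induction n generalizing x with
  | zero => simp
  | succ n ih =>
    calc anorm A ((T ^ (n + 1)) x) = anorm A ((T ^ n) (T x)) := by rw [pow_succ]; rfl
      _ ≤ opAnorm A T ^ n * anorm A (T x) := ih (T x)
      _ ≤ opAnorm A T ^ n * (opAnorm A T * anorm A x) := by
        gcongr
        · exact pow_nonneg (opAnorm_nonneg A T) n
        · exact hT.anorm_apply_le x
      _ = opAnorm A T ^ (n + 1) * anorm A x := by ring

lemma opAnorm_pow_le (hT : ABounded A T) (n : ℕ) : opAnorm A (T ^ n) ≤ opAnorm A T ^ n :=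
  opAnorm_le_of_forall (pow_nonneg (opAnorm_nonneg A T) n) fun x hx => by
    simpa [hx] using hT.anorm_pow_apply_le n x

end ABounded

lemma rA_nonneg (A T : E →L[ℂ] E) : 0 ≤ rA A T :=
  Real.iInf_nonneg fun _ => Real.rpow_nonneg (opAnorm_nonneg A _) _

lemma rA_le_opAnorm_pow_rpow (A T : E →L[ℂ] E) (n : ℕ+) :
    rA A T ≤ opAnorm A (T ^ (n : ℕ)) ^ (((n : ℕ) : ℝ)⁻¹) :=
  ciInf_le ⟨0, by rintro _ ⟨m, rfl⟩; exact Real.rpow_nonneg (opAnorm_nonneg A _) _⟩ n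

lemma rA_pow_le_opAnorm_pow (A T : E →L[ℂ] E) {n : ℕ} (hn : 0 < n) :
    rA A T ^ n ≤ opAnorm A (T ^ n) :=
  calc rA A T ^ n ≤ (opAnorm A (T ^ n) ^ ((n : ℝ)⁻¹)) ^ n :=
        pow_le_pow_left₀ (rA_nonneg A T) (rA_le_opAnorm_pow_rpow A T ⟨n, hn⟩) n
    _ = opAnorm A (T ^ n) := Real.rpow_inv_natCast_pow (opAnorm_nonneg A _) hn.ne'

end

theorem stmt_10_general (A T : H →L[ℂ] H)
    (hT : ABounded A T) :
    rA A T = opAnorm A T ↔ ∀ n : ℕ, 0 < n → opAnorm A (T ^ n) = (opAnorm A T) ^ n := by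
  constructor
  · intro hr n hn
    refine (hT.opAnorm_pow_le n).antisymm ?_
    simpa [hr] using rA_pow_le_opAnorm_pow A T hn
  · intro h
    calc rA A T = ⨅ _ : ℕ+, opAnorm A T := by
          refine iInf_congr fun n => ?_
          rw [h n n.pos, Real.pow_rpow_inv_natCast (opAnorm_nonneg A T) n.ne_zero]
      _ = opAnorm A T := ciInf_const

theorem stmt_10 (A T : H →L[ℂ] H) (hA : A.IsPositive) (hA0 : A ≠ 0)
    (hT : ABounded A T) :
    rA A T = opAnorm A T ↔ ∀ n : ℕ, 0 < n → opAnorm A (T ^ n) = (opAnorm A T) ^ n :=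
  stmt_10_general A T hT
end

section
/- If T is a bounded operator on H that is A-self-adjoint (AT = T*A), then T is A-paranormal: ‖Tx‖_A² ≤ ‖T²x‖_A for every x with ‖x‖_A = 1. -/
open Filter

variable {H : Type*} [NormedAddCommGroup H] [InnerProductSpace ℂ H] [CompleteSpace H]

/-! A-self-adjointness turns `‖Tx‖_A²` into `Re ⟨Ax, T²x⟩`, and Cauchy–Schwarz for the
semi-inner product `⟨A·, ·⟩` bounds this by `‖x‖_A ‖T²x‖_A`. -/

section PositiveCore

variable {𝕜 E : Type*} [RCLike 𝕜] [NormedAddCommGroup E] [InnerProductSpace 𝕜 E]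

noncomputable abbrev ContinuousLinearMap.IsPositive.preInnerProductSpaceCore {A : E →L[𝕜] E}
    (hA : A.IsPositive) : PreInnerProductSpace.Core 𝕜 E where
  inner x y := inner 𝕜 (A x) y
  conj_inner_symm x y := by rw [inner_conj_symm, hA.inner_left_eq_inner_right]
  re_inner_nonneg := hA.re_inner_nonneg_left
  add_left x y z := by simp only [map_add, inner_add_left]
  smul_left x y r := by simp only [map_smul, inner_smul_left]

end PositiveCore

section ANorm

variable {E : Type*} [NormedAddCommGroup E] [InnerProductSpace ℂ E] {A : E →L[ℂ] E}

theorem norm_inner_le_anorm_mul_anorm (hA : A.IsPositive) (x y : E) :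
    ‖inner ℂ (A x) y‖ ≤ anorm A x * anorm A y :=
  -- the seminorm of `hA.preInnerProductSpaceCore` is `anorm A` definitionally
  @InnerProductSpace.Core.norm_inner_le_norm ℂ E _ _ _ hA.preInnerProductSpaceCore x y

theorem anorm_sq (hA : A.IsPositive) (x : E) : anorm A x ^ 2 = (inner ℂ (A x) x).re :=
  Real.sq_sqrt (hA.re_inner_nonneg_left x)

variable [CompleteSpace E] {T : E →L[ℂ] E}

theorem anorm_apply_sq_eq_re_inner (hA : A.IsPositive)
    (hsa : A ∘L T = (ContinuousLinearMap.adjoint T) ∘L A) (x : E) :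
    anorm A (T x) ^ 2 = (inner ℂ (A x) (T (T x))).re := by
  rw [anorm_sq hA, ← ContinuousLinearMap.comp_apply, hsa, ContinuousLinearMap.comp_apply,
    ContinuousLinearMap.adjoint_inner_left]

theorem anorm_apply_sq_le (hA : A.IsPositive)
    (hsa : A ∘L T = (ContinuousLinearMap.adjoint T) ∘L A) (x : E) :
    anorm A (T x) ^ 2 ≤ anorm A x * anorm A (T (T x)) :=
  calc anorm A (T x) ^ 2 = (inner ℂ (A x) (T (T x))).re := anorm_apply_sq_eq_re_inner hA hsa x
    _ ≤ ‖inner ℂ (A x) (T (T x))‖ := Complex.re_le_norm _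
    _ ≤ anorm A x * anorm A (T (T x)) := norm_inner_le_anorm_mul_anorm hA x (T (T x))

end ANorm

theorem stmt_18_general (A T : H →L[ℂ] H) (hA : A.IsPositive)
    (hsa : A ∘L T = (ContinuousLinearMap.adjoint T) ∘L A) :
    ∀ x : H, anorm A x = 1 → (anorm A (T x)) ^ 2 ≤ anorm A ((T ^ 2) x) := by
  intro x hx
  simpa [hx, sq] using anorm_apply_sq_le hA hsa x

theorem stmt_18 (A T : H →L[ℂ] H) (hA : A.IsPositive) (hA0 : A ≠ 0)
    (hsa : A ∘L T = (ContinuousLinearMap.adjoint T) ∘L A) :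
    ∀ x : H, anorm A x = 1 → (anorm A (T x)) ^ 2 ≤ anorm A ((T ^ 2) x) :=
  stmt_18_general A T hA hsa
end
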